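/- Fix a > 2, λ > 0, 0 < ν ≤ 1, and z ∈ ℝ, and let ρ_λ be the SCAD penalty with parameters (a, λ). Define x̂ ∈ ℝ by: x̂ = 0 if |z| ≤ νλ; x̂ = z − sign(z)·νλ if νλ ≤ |z| ≤ (ν + 1)λ; x̂ = (z − sign(z)·aνλ/(a − 1))/(1 − ν/(a − 1)) if (ν + 1)λ ≤ |z| ≤ aλ; and x̂ = z if |z| ≥ aλ. Then x̂ is a global minimizer over ℝ of the function x ↦ (1/2)(x − z)² + ν·ρ_λ(x). -/
import Mathlib

/-- The SCAD penalty with parameters `a > 2` and `λ > 0`. -/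
noncomputable def scad (a lam t : ℝ) : ℝ :=
  if |t| ≤ lam then lam * |t|
  else if |t| ≤ a * lam then -(t ^ 2 - 2 * a * lam * |t| + lam ^ 2) / (2 * (a - 1))
  else (a + 1) * lam ^ 2 / 2

lemma scad_neg (a lam t : ℝ) : scad a lam (-t) = scad a lam t := by
  simp [scad, abs_neg]

lemma scad_of_le {a lam t : ℝ} (h : |t| ≤ lam) : scad a lam t = lam * |t| := by
  simp [scad, h]

lemma scad_of_mid {a lam t : ℝ} (ha : 1 < a) (h1 : lam ≤ |t|) (h2 : |t| ≤ a * lam) :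
    scad a lam t = -(t ^ 2 - 2 * a * lam * |t| + lam ^ 2) / (2 * (a - 1)) := by
  unfold scad
  split_ifs with h
  · have he : |t| = lam := le_antisymm h h1
    have ht2 : t ^ 2 = lam ^ 2 := by rw [← sq_abs, he]
    rw [he, ht2]
    have h0 : a - 1 ≠ 0 := by linarith
    field_simp; ring
  · rfl

lemma scad_of_high {a lam t : ℝ} (ha : 1 < a) (hlam : 0 < lam) (h : a * lam ≤ |t|) :
    scad a lam t = (a + 1) * lam ^ 2 / 2 := by
  unfold scad
  split_ifs with h1 h2
  · nlinarith
  · have he : |t| = a * lam := le_antisymm h2 h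
    have ht2 : t ^ 2 = (a * lam) ^ 2 := by rw [← sq_abs, he]
    rw [he, ht2]
    have h0 : a - 1 ≠ 0 := by linarith
    field_simp; ring
  · rfl

set_option maxHeartbeats 2000000 in
lemma key (a lam ν z : ℝ) (ha : 2 < a) (hlam : 0 < lam) (hν0 : 0 < ν) (hν1 : ν ≤ 1)
    (hz : 0 ≤ z) (xhat : ℝ)
    (hx : (|z| ≤ ν * lam ∧ xhat = 0) ∨
          (ν * lam ≤ |z| ∧ |z| ≤ (ν + 1) * lam ∧ xhat = z - Real.sign z * (ν * lam)) ∨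
          ((ν + 1) * lam ≤ |z| ∧ |z| ≤ a * lam ∧
            xhat = (z - Real.sign z * (a * ν * lam / (a - 1))) / (1 - ν / (a - 1))) ∨
          (a * lam ≤ |z| ∧ xhat = z)) :
    ∀ x : ℝ, (1 / 2) * (xhat - z) ^ 2 + ν * scad a lam xhat ≤
      (1 / 2) * (x - z) ^ 2 + ν * scad a lam x := by
  have ha1 : (1:ℝ) < a := by linarith
  have hne : a - 1 ≠ 0 := by linarith
  have haν : 0 < a - 1 - ν := by linarith
  have h2a : (0:ℝ) ≤ 2 * (a - 1) := by linarith
  have habs : |z| = z := abs_of_nonneg hz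
  rw [habs] at hx
  intro x
  rcases hx with ⟨hz1, hxe⟩ | ⟨hz1, hz2, hxe⟩ | ⟨hz1, hz2, hxe⟩ | ⟨hz1, hxe⟩
  -- CASE 1 : z ≤ ν lam, xhat = 0
  · subst hxe
    have hS : scad a lam 0 = 0 := by
      rw [scad_of_le (by simp; positivity)]; simp
    rw [hS]
    rcases le_or_gt |x| lam with hA | hA
    · rw [scad_of_le hA]
      rcases abs_cases x with ⟨he, hs⟩ | ⟨he, hs⟩ <;> rw [he] at hA ⊢
      · nlinarith
      · nlinarith
    rcases le_or_gt |x| (a * lam) with hB | hB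
    · rw [scad_of_mid ha1 hA.le hB]
      rcases abs_cases x with ⟨he, hs⟩ | ⟨he, hs⟩ <;> rw [he] at hA hB ⊢ <;>
        rw [← sub_nonneg]
      · have hQ : (0:ℝ) ≤ (a-1)*(x-z)^2 + ν*(2*a*lam*x - x^2 - lam^2) - (a-1)*z^2 := by
          nlinarith [mul_nonneg (show (0:ℝ) ≤ x by linarith) (show (0:ℝ) ≤ ν*lam - z by linarith),
            mul_nonneg (show (0:ℝ) ≤ x - lam by linarith) (show (0:ℝ) ≤ x + lam by linarith),
            mul_nonneg (mul_nonneg hν0.le hlam.le) (show (0:ℝ) ≤ x - lam by linarith),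
            mul_pos (mul_pos haν hlam) hlam, mul_pos (mul_pos hν0 hlam) hlam]
        refine le_trans (div_nonneg hQ h2a) (le_of_eq ?_)
        field_simp; ring
      · have hQ : (0:ℝ) ≤ (a-1)*(x-z)^2 + ν*(2*a*lam*(-x) - x^2 - lam^2) - (a-1)*z^2 := by
          nlinarith [mul_nonneg (show (0:ℝ) ≤ -x by linarith) hz,
            mul_nonneg (show (0:ℝ) ≤ -x - lam by linarith) (show (0:ℝ) ≤ -x + lam by linarith),
            mul_nonneg (show (0:ℝ) ≤ 2*a*ν*lam by positivity) (show (0:ℝ) ≤ -x - lam by linarith),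
            mul_pos (mul_pos haν hlam) hlam, mul_pos (mul_pos hν0 hlam) hlam]
        refine le_trans (div_nonneg hQ h2a) (le_of_eq ?_)
        field_simp; ring
    · rw [scad_of_high ha1 hlam hB.le]
      rcases abs_cases x with ⟨he, hs⟩ | ⟨he, hs⟩ <;> rw [he] at hA hB
      · nlinarith [mul_pos (show (0:ℝ) < x by linarith) (show (0:ℝ) < x - 2*z by nlinarith),
          mul_pos (mul_pos hν0 hlam) hlam]
      · nlinarith [mul_nonneg (show (0:ℝ) ≤ -x by linarith) hz, sq_nonneg x,
          mul_pos (mul_pos hν0 hlam) hlam]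
  -- CASE 2
  · have hzpos : 0 < z := lt_of_lt_of_le (by positivity) hz1
    have hsz : Real.sign z = 1 := Real.sign_of_pos hzpos
    rw [hsz, one_mul] at hxe
    subst hxe
    have hx0 : (0:ℝ) ≤ z - ν * lam := by linarith
    have hS : scad a lam (z - ν * lam) = lam * (z - ν * lam) := by
      rw [scad_of_le (by rw [abs_of_nonneg hx0]; linarith), abs_of_nonneg hx0]
    rw [hS]
    rcases le_or_gt |x| lam with hA | hA
    · rw [scad_of_le hA]
      rcases abs_cases x with ⟨he, hs⟩ | ⟨he, hs⟩ <;> rw [he] at hA ⊢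
      · nlinarith [sq_nonneg (x - (z - ν * lam))]
      · nlinarith [sq_nonneg (x - (z - ν * lam)),
          mul_nonneg (mul_nonneg hν0.le hlam.le) (show (0:ℝ) ≤ -x by linarith)]
    rcases le_or_gt |x| (a * lam) with hB | hB
    · rw [scad_of_mid ha1 hA.le hB]
      rcases abs_cases x with ⟨he, hs⟩ | ⟨he, hs⟩ <;> rw [he] at hA hB ⊢ <;>
        rw [← sub_nonneg]
      · have hQ : (0:ℝ) ≤ (a-1)*(x-z)^2 + ν*(2*a*lam*x - x^2 - lam^2)
            - ((a-1)*(ν*lam)^2 + 2*(a-1)*(ν*lam)*(z - ν*lam)) := by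
          nlinarith [mul_nonneg haν.le (sq_nonneg (x - lam)),
            mul_nonneg (show (0:ℝ) ≤ x - lam by linarith)
              (mul_nonneg (show (0:ℝ) ≤ a - 1 by linarith) (show (0:ℝ) ≤ (ν+1)*lam - z by linarith)),
            mul_nonneg (show (0:ℝ) ≤ a - 1 by linarith) (sq_nonneg (lam - (z - ν*lam)))]
        refine le_trans (div_nonneg hQ h2a) (le_of_eq ?_)
        field_simp; ring
      · have hQ : (0:ℝ) ≤ (a-1)*(x-z)^2 + ν*(2*a*lam*(-x) - x^2 - lam^2)
            - ((a-1)*(ν*lam)^2 + 2*(a-1)*(ν*lam)*(z - ν*lam)) := by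
          nlinarith [mul_nonneg (mul_nonneg haν.le (show (0:ℝ) ≤ -x - lam by linarith))
              (show (0:ℝ) ≤ lam - x by linarith),
            mul_nonneg (show (0:ℝ) ≤ -x - lam by linarith)
              (show (0:ℝ) ≤ (a-1)*z + a*ν*lam by nlinarith [mul_nonneg (show (0:ℝ) ≤ a-1 by linarith) hz]),
            mul_nonneg (show (0:ℝ) ≤ a - 1 by linarith) (mul_nonneg hlam.le hz),
            mul_nonneg (mul_nonneg (show (0:ℝ) ≤ a - 1 by linarith) (show (0:ℝ) ≤ 1 - ν by linarith)) (mul_nonneg hlam.le hz),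
            mul_nonneg (show (0:ℝ) ≤ a - 1 by linarith) (mul_pos hlam hlam).le,
            mul_nonneg (mul_nonneg (show (0:ℝ) ≤ a - 1 by linarith) hν0.le) (mul_pos hlam hlam).le]
        refine le_trans (div_nonneg hQ h2a) (le_of_eq ?_)
        field_simp; ring
    · rw [scad_of_high ha1 hlam hB.le]
      rcases abs_cases x with ⟨he, hs⟩ | ⟨he, hs⟩ <;> rw [he] at hA hB
      · nlinarith [mul_nonneg (show (0:ℝ) ≤ x - a*lam by linarith)
            (show (0:ℝ) ≤ x + a*lam - 2*z by nlinarith),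
          mul_pos haν (mul_pos hlam hlam),
          mul_nonneg (mul_nonneg haν.le hν0.le) (mul_pos hlam hlam).le,
          mul_nonneg (show (0:ℝ) ≤ (ν+1)*lam - z by linarith) (mul_nonneg hν0.le hlam.le)]
      · nlinarith [mul_nonneg (show (0:ℝ) ≤ -x by linarith) hz,
          mul_nonneg (show (0:ℝ) ≤ -x - a*lam by linarith) (show (0:ℝ) ≤ a*lam - x by nlinarith),
          mul_pos haν (mul_pos hlam hlam),
          mul_nonneg (mul_nonneg haν.le hν0.le) (mul_pos hlam hlam).le,
          mul_nonneg (show (0:ℝ) ≤ (ν+1)*lam - z by linarith) (mul_nonneg hν0.le hlam.le)]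
  -- CASE 3
  · have hzpos : 0 < z := by nlinarith
    have hsz : Real.sign z = 1 := Real.sign_of_pos hzpos
    rw [hsz, one_mul] at hxe
    have hc : (a - 1 - ν) * xhat = (a-1)*z - a*ν*lam := by
      rw [hxe]
      have hd : 1 - ν / (a-1) ≠ 0 := by
        have : 1 - ν / (a-1) = (a-1-ν)/(a-1) := by field_simp
        rw [this]; positivity
      field_simp
    have hh1 : lam ≤ xhat := by
      nlinarith [mul_nonneg (show (0:ℝ) ≤ a-1 by linarith) (show (0:ℝ) ≤ z - (ν+1)*lam by linarith)]
    have hh2 : xhat ≤ a * lam := by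
      nlinarith [mul_nonneg (show (0:ℝ) ≤ a-1 by linarith) (show (0:ℝ) ≤ a*lam - z by linarith)]
    have hx0 : (0:ℝ) ≤ xhat := le_trans hlam.le hh1
    have hSabs : |xhat| = xhat := abs_of_nonneg hx0
    rw [scad_of_mid ha1 (by rw [hSabs]; exact hh1) (by rw [hSabs]; exact hh2), hSabs]
    have hch : ((a-1-ν)*xhat)*xhat = ((a-1)*z - a*ν*lam)*xhat := by rw [hc]
    have hcx : ((a-1-ν)*xhat)*x = ((a-1)*z - a*ν*lam)*x := by rw [hc]
    have hcl : ((a-1-ν)*xhat)*lam = ((a-1)*z - a*ν*lam)*lam := by rw [hc]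
    have hca : ((a-1-ν)*xhat)*(a*lam) = ((a-1)*z - a*ν*lam)*(a*lam) := by rw [hc]
    rcases le_or_gt |x| lam with hA | hA
    · rw [scad_of_le hA]
      rcases abs_cases x with ⟨he, hs⟩ | ⟨he, hs⟩ <;> rw [he] at hA ⊢ <;>
        rw [← sub_nonneg]
      · have hQ : (0:ℝ) ≤ (a-1)*(x-z)^2 + 2*(a-1)*ν*lam*x
            - ((a-1)*(xhat-z)^2 + ν*(2*a*lam*xhat - xhat^2 - lam^2)) := by
          nlinarith [mul_nonneg (mul_nonneg (show (0:ℝ) ≤ a-1 by linarith)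
              (show (0:ℝ) ≤ lam - x by linarith)) (show (0:ℝ) ≤ 2*z - 2*ν*lam - x - lam by linarith),
            mul_nonneg haν.le (sq_nonneg (lam - xhat)), hch, hcl]
        refine le_trans (div_nonneg hQ h2a) (le_of_eq ?_)
        field_simp; ring
      · have hQ : (0:ℝ) ≤ (a-1)*(x-z)^2 + 2*(a-1)*ν*lam*(-x)
            - ((a-1)*(xhat-z)^2 + ν*(2*a*lam*xhat - xhat^2 - lam^2)) := by
          nlinarith [mul_nonneg (mul_nonneg (show (0:ℝ) ≤ a-1 by linarith)
              (show (0:ℝ) ≤ -x by linarith)) hz,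
            mul_nonneg (mul_nonneg (show (0:ℝ) ≤ a-1 by linarith)
              (show (0:ℝ) ≤ -x by linarith)) (mul_nonneg hν0.le hlam.le),
            mul_nonneg (show (0:ℝ) ≤ a-1 by linarith) (sq_nonneg x),
            mul_nonneg (mul_nonneg (show (0:ℝ) ≤ a-1 by linarith) hlam.le)
              (show (0:ℝ) ≤ 2*z - 2*ν*lam - lam by linarith),
            mul_nonneg haν.le (sq_nonneg (lam - xhat)), hch, hcl]
        refine le_trans (div_nonneg hQ h2a) (le_of_eq ?_)
        field_simp; ring
    rcases le_or_gt |x| (a * lam) with hB | hB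
    · rw [scad_of_mid ha1 hA.le hB]
      rcases abs_cases x with ⟨he, hs⟩ | ⟨he, hs⟩ <;> rw [he] at hA hB ⊢ <;>
        rw [← sub_nonneg]
      · have hQ : (0:ℝ) ≤ (a-1)*(x-z)^2 + ν*(2*a*lam*x - x^2 - lam^2)
            - ((a-1)*(xhat-z)^2 + ν*(2*a*lam*xhat - xhat^2 - lam^2)) := by
          nlinarith [mul_nonneg haν.le (sq_nonneg (x - xhat)), hch, hcx]
        refine le_trans (div_nonneg hQ h2a) (le_of_eq ?_)
        field_simp; ring
      · have hQ : (0:ℝ) ≤ (a-1)*(x-z)^2 + ν*(2*a*lam*(-x) - x^2 - lam^2)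
            - ((a-1)*(xhat-z)^2 + ν*(2*a*lam*xhat - xhat^2 - lam^2)) := by
          nlinarith [mul_nonneg (mul_nonneg haν.le (show (0:ℝ) ≤ -x - lam by linarith))
              (show (0:ℝ) ≤ lam - x by linarith),
            mul_nonneg (show (0:ℝ) ≤ -x - lam by linarith)
              (show (0:ℝ) ≤ (a-1)*z + a*ν*lam by nlinarith [mul_nonneg (show (0:ℝ) ≤ a-1 by linarith) hz]),
            mul_nonneg (show (0:ℝ) ≤ a-1 by linarith) (mul_nonneg hlam.le hz),
            mul_nonneg (show (0:ℝ) ≤ a-1 by linarith) (mul_pos hlam hlam).le,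
            mul_nonneg (mul_nonneg (show (0:ℝ) ≤ a-1 by linarith) hν0.le) (mul_pos hlam hlam).le,
            mul_nonneg (mul_nonneg (show (0:ℝ) ≤ a-1 by linarith) hlam.le)
              (show (0:ℝ) ≤ 2*z - 2*ν*lam - lam by linarith),
            mul_nonneg haν.le (sq_nonneg (lam - xhat)), hch, hcl]
        refine le_trans (div_nonneg hQ h2a) (le_of_eq ?_)
        field_simp; ring
    · rw [scad_of_high ha1 hlam hB.le]
      rcases abs_cases x with ⟨he, hs⟩ | ⟨he, hs⟩ <;> rw [he] at hA hB <;>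
        rw [← sub_nonneg]
      · have hQ : (0:ℝ) ≤ (a-1)*(x-z)^2 + ν*((a^2-1)*lam^2)
            - ((a-1)*(xhat-z)^2 + ν*(2*a*lam*xhat - xhat^2 - lam^2)) := by
          nlinarith [mul_nonneg (mul_nonneg (show (0:ℝ) ≤ a-1 by linarith)
              (show (0:ℝ) ≤ x - a*lam by linarith)) (show (0:ℝ) ≤ x + a*lam - 2*z by nlinarith),
            mul_nonneg haν.le (sq_nonneg (a*lam - xhat)), hch, hca]
        refine le_trans (div_nonneg hQ h2a) (le_of_eq ?_)
        field_simp; ring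
      · have hQ : (0:ℝ) ≤ (a-1)*(x-z)^2 + ν*((a^2-1)*lam^2)
            - ((a-1)*(xhat-z)^2 + ν*(2*a*lam*xhat - xhat^2 - lam^2)) := by
          nlinarith [mul_nonneg (mul_nonneg (show (0:ℝ) ≤ a-1 by linarith)
              (show (0:ℝ) ≤ a*lam - x by nlinarith)) (show (0:ℝ) ≤ 2*z - x - a*lam by nlinarith),
            mul_nonneg haν.le (sq_nonneg (a*lam - xhat)), hch, hca]
        refine le_trans (div_nonneg hQ h2a) (le_of_eq ?_)
        field_simp; ring
  -- CASE 4
  · subst hxe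
    rw [scad_of_high ha1 hlam (by rw [habs]; exact hz1)]
    rcases le_or_gt |x| lam with hA | hA
    · rw [scad_of_le hA]
      rcases abs_cases x with ⟨he, hs⟩ | ⟨he, hs⟩ <;> rw [he] at hA ⊢
      · nlinarith [mul_nonneg (show (0:ℝ) ≤ xhat - a*lam by linarith)
            (show (0:ℝ) ≤ xhat + a*lam - 2*x by nlinarith),
          mul_nonneg (show (0:ℝ) ≤ lam - x by linarith)
            (show (0:ℝ) ≤ 2*a*lam - x - lam - 2*ν*lam by nlinarith),
          mul_nonneg (mul_nonneg (show (0:ℝ) ≤ a-1 by linarith) haν.le) (mul_pos hlam hlam).le]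
      · nlinarith [mul_nonneg (show (0:ℝ) ≤ xhat - a*lam by linarith)
            (show (0:ℝ) ≤ xhat + a*lam - 2*x by nlinarith),
          mul_nonneg (show (0:ℝ) ≤ lam - x by linarith)
            (show (0:ℝ) ≤ 2*a*lam - x - lam - 2*ν*lam by nlinarith),
          mul_nonneg (mul_nonneg hν0.le hlam.le) (show (0:ℝ) ≤ -x by linarith),
          mul_nonneg (mul_nonneg (show (0:ℝ) ≤ a-1 by linarith) haν.le) (mul_pos hlam hlam).le]
    rcases le_or_gt |x| (a * lam) with hB | hB
    · rw [scad_of_mid ha1 hA.le hB]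
      rcases abs_cases x with ⟨he, hs⟩ | ⟨he, hs⟩ <;> rw [he] at hA hB ⊢ <;>
        rw [← sub_nonneg]
      · have hQ : (0:ℝ) ≤ (a-1)*(x-xhat)^2 + ν*(2*a*lam*x - x^2 - lam^2) - ν*(a^2-1)*lam^2 := by
          nlinarith [mul_nonneg (show (0:ℝ) ≤ xhat - a*lam by linarith)
              (show (0:ℝ) ≤ xhat + a*lam - 2*x by nlinarith),
            mul_nonneg haν.le (sq_nonneg (x - a*lam))]
        refine le_trans (div_nonneg hQ h2a) (le_of_eq ?_)
        field_simp; ring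
      · have hQ : (0:ℝ) ≤ (a-1)*(x-xhat)^2 + ν*(2*a*lam*(-x) - x^2 - lam^2) - ν*(a^2-1)*lam^2 := by
          nlinarith [mul_nonneg (show (0:ℝ) ≤ xhat - a*lam by linarith)
              (show (0:ℝ) ≤ xhat + a*lam - 2*x by nlinarith),
            mul_nonneg haν.le (sq_nonneg (x - a*lam)),
            mul_nonneg (show (0:ℝ) ≤ a*ν*lam by positivity) (show (0:ℝ) ≤ -x by linarith)]
        refine le_trans (div_nonneg hQ h2a) (le_of_eq ?_)
        field_simp; ring
    · rw [scad_of_high ha1 hlam hB.le]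
      nlinarith [sq_nonneg (x - xhat)]

theorem scad_prox_closed_form
    (a lam ν z : ℝ) (ha : 2 < a) (hlam : 0 < lam) (hν0 : 0 < ν) (hν1 : ν ≤ 1)
    (xhat : ℝ)
    (hx : (|z| ≤ ν * lam ∧ xhat = 0) ∨
          (ν * lam ≤ |z| ∧ |z| ≤ (ν + 1) * lam ∧ xhat = z - Real.sign z * (ν * lam)) ∨
          ((ν + 1) * lam ≤ |z| ∧ |z| ≤ a * lam ∧
            xhat = (z - Real.sign z * (a * ν * lam / (a - 1))) / (1 - ν / (a - 1))) ∨
          (a * lam ≤ |z| ∧ xhat = z)) :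
    ∀ x : ℝ, (1 / 2) * (xhat - z) ^ 2 + ν * scad a lam xhat ≤
      (1 / 2) * (x - z) ^ 2 + ν * scad a lam x := by
  rcases le_or_gt 0 z with hz | hz
  · exact key a lam ν z ha hlam hν0 hν1 hz xhat hx
  · intro x
    have hx' : (|(-z)| ≤ ν * lam ∧ (-xhat) = 0) ∨
          (ν * lam ≤ |(-z)| ∧ |(-z)| ≤ (ν + 1) * lam ∧
            (-xhat) = (-z) - Real.sign (-z) * (ν * lam)) ∨
          ((ν + 1) * lam ≤ |(-z)| ∧ |(-z)| ≤ a * lam ∧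
            (-xhat) = ((-z) - Real.sign (-z) * (a * ν * lam / (a - 1))) / (1 - ν / (a - 1))) ∨
          (a * lam ≤ |(-z)| ∧ (-xhat) = -z) := by
      rcases hx with ⟨h1, h2⟩ | ⟨h1, h2, h3⟩ | ⟨h1, h2, h3⟩ | ⟨h1, h2⟩
      · exact Or.inl ⟨by rwa [abs_neg], by rw [h2]; ring⟩
      · exact Or.inr (Or.inl ⟨by rwa [abs_neg], by rwa [abs_neg],
          by rw [h3, Real.sign_neg]; ring⟩)
      · exact Or.inr (Or.inr (Or.inl ⟨by rwa [abs_neg], by rwa [abs_neg],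
          by rw [h3, Real.sign_neg]; ring⟩))
      · exact Or.inr (Or.inr (Or.inr ⟨by rwa [abs_neg], by rw [h2]⟩))
    have h := key a lam ν (-z) ha hlam hν0 hν1 (by linarith) (-xhat) hx' (-x)
    rw [scad_neg, scad_neg] at h
    have e1 : (-xhat - -z) ^ 2 = (xhat - z) ^ 2 := by ring
    have e2 : (-x - -z) ^ 2 = (x - z) ^ 2 := by ring
    rw [e1, e2] at h
    exact h
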